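/- Let f : ℕ → ℕ be strictly increasing with ∑_{n≥1} 1/f(n) < ∞, let (a_n) be positive integers with ∑_{n≥1} 1/a_n < ∞, and let E(f,a) := {α ∈ (0,1) : s_{f(i)+1}(α) ≤ (f(i)+1)/a_i for all i ≥ 1}, where s_j(α) are the factoradic digits of α. Then for each α ∈ E(f,a) there exists C > 0 such that |∑_{n ≤ N} e^{2πi (n + f(n)!) α}| ≤ C for all N ∈ ℕ. -/

import Mathlib

/-!
Write the summand as `z ^ n * b n` with `z = e α ≠ 1` and `b n = e ((f n)! α)`. The partial sums
of `z ^ n` are bounded by `2 / ‖z - 1‖`, so by Abel summation it suffices that `b` has bounded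
variation, which follows from `∑ ‖b n - 1‖ < ∞`. As `‖e x - 1‖ ≤ 2π {x}`, this reduces to bounding
`{m! α}`: the factoradic digits `s j` with `j ≤ m` contribute an integer to `m! α`, the digit
`s (m + 1)` contributes `s (m + 1) / (m + 1)`, and since `s j ≤ j - 1` the remaining terms are
dominated by the telescoping series `∑_{j > m + 1} m! (1 / (j - 1)! - 1 / j!) = 1 / (m + 1)`.
For `m = f n` the digit hypothesis turns this into `{(f n)! α} ≤ 1 / a n + 1 / f n`, a summable bound.
-/

noncomputable def e (x : ℝ) : ℂ := Complex.exp (2 * Real.pi * Complex.I * x)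

open Finset Real
open scoped Nat

lemma e_eq_exp (x : ℝ) : e x = Complex.exp (Complex.I * ↑(2 * π * x)) := by
  rw [e]; push_cast; ring_nf

lemma norm_e (x : ℝ) : ‖e x‖ = 1 := by
  rw [e_eq_exp, Complex.norm_exp_I_mul_ofReal]

lemma e_add (x y : ℝ) : e (x + y) = e x * e y := by
  simp only [e, ← Complex.exp_add]; push_cast; ring_nf

lemma e_natCast_mul (n : ℕ) (x : ℝ) : e (n * x) = e x ^ n := by
  simp only [e, ← Complex.exp_nat_mul]; push_cast; ring_nf

lemma e_periodic : Function.Periodic e 1 := fun x => by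
  rw [e_add, show e 1 = 1 by simp [e], mul_one]

lemma e_fract (x : ℝ) : e (Int.fract x) = e x := by
  simpa using e_periodic.sub_int_mul_eq (x := x) ⌊x⌋

lemma norm_e_sub_one (x : ℝ) : ‖e x - 1‖ = 2 * |Real.sin (π * x)| := by
  rw [e_eq_exp, Complex.norm_exp_I_mul_ofReal_sub_one, norm_mul, Real.norm_eq_abs,
    Real.norm_eq_abs, abs_two]
  ring_nf

lemma norm_e_sub_one_le (x : ℝ) : ‖e x - 1‖ ≤ 2 * π * |x| := by
  rw [e_eq_exp]
  refine norm_exp_I_mul_ofReal_sub_one_le.trans_eq ?_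
  rw [Real.norm_eq_abs, abs_mul, abs_of_pos Real.two_pi_pos]

lemma e_ne_one {x : ℝ} (hx : x ∈ Set.Ioo 0 1) : e x ≠ 1 := by
  rw [← sub_ne_zero, ← norm_pos_iff, norm_e_sub_one]
  have : 0 < Real.sin (π * x) :=
    Real.sin_pos_of_pos_of_lt_pi (by nlinarith [hx.1, pi_pos]) (by nlinarith [hx.2, pi_pos])
  positivity

lemma norm_geom_sum_le {𝕜 : Type*} [NormedField 𝕜] {z : 𝕜} (hz : ‖z‖ ≤ 1) (hz1 : z ≠ 1)
    (N : ℕ) : ‖∑ n ∈ range N, z ^ n‖ ≤ 2 / ‖z - 1‖ := by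
  rw [le_div_iff₀ (norm_pos_iff.mpr (sub_ne_zero.mpr hz1)), ← norm_mul, geom_sum_mul]
  calc ‖z ^ N - 1‖ ≤ ‖z‖ ^ N + ‖(1 : 𝕜)‖ := by rw [← norm_pow]; exact norm_sub_le _ _
    _ ≤ 2 := by rw [norm_one]; linarith [pow_le_one₀ (norm_nonneg z) hz (n := N)]

lemma norm_sum_range_mul_le {R : Type*} [NormedRing R] {x b : ℕ → R} {M B : ℝ}
    (hx : ∀ N, ‖∑ n ∈ range N, x n‖ ≤ M) (hb : ∀ n, ‖b n‖ ≤ B) (N : ℕ) :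
    ‖∑ n ∈ range N, x n * b n‖ ≤ M * (B + ∑ n ∈ range N, ‖b (n + 1) - b n‖) := by
  have hM : 0 ≤ M := (norm_nonneg _).trans (hx 0)
  have hdiff : ∀ N, ‖∑ n ∈ range N, x n * b n - (∑ n ∈ range N, x n) * b N‖
      ≤ M * ∑ n ∈ range N, ‖b (n + 1) - b n‖ := by
    intro N
    induction N with
    | zero => simp
    | succ N ih =>
      have hstep : ∑ n ∈ range (N + 1), x n * b n - (∑ n ∈ range (N + 1), x n) * b (N + 1)
          = (∑ n ∈ range N, x n * b n - (∑ n ∈ range N, x n) * b N)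
            + (∑ n ∈ range (N + 1), x n) * (b N - b (N + 1)) := by
        simp only [sum_range_succ]; noncomm_ring
      rw [hstep, sum_range_succ (fun n => ‖b (n + 1) - b n‖), mul_add]
      refine (norm_add_le _ _).trans (add_le_add ih ?_)
      rw [norm_sub_rev (b (N + 1))]
      exact (norm_mul_le _ _).trans (mul_le_mul_of_nonneg_right (hx _) (norm_nonneg _))
  calc ‖∑ n ∈ range N, x n * b n‖
      ≤ ‖(∑ n ∈ range N, x n) * b N‖
        + ‖∑ n ∈ range N, x n * b n - (∑ n ∈ range N, x n) * b N‖ :=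
        norm_le_norm_add_norm_sub' _ _
    _ ≤ M * B + M * ∑ n ∈ range N, ‖b (n + 1) - b n‖ :=
      add_le_add ((norm_mul_le _ _).trans (mul_le_mul (hx N) (hb N) (norm_nonneg _) hM))
        (hdiff N)
    _ = M * (B + ∑ n ∈ range N, ‖b (n + 1) - b n‖) := by ring

lemma sum_range_norm_sub_le_two_mul_tsum {E : Type*} [SeminormedAddCommGroup E] {b : ℕ → E}
    {c : E} (h : Summable fun n => ‖b n - c‖) (N : ℕ) :
    ∑ n ∈ range N, ‖b (n + 1) - b n‖ ≤ 2 * ∑' n, ‖b n - c‖ := by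
  have hpartial : ∀ K, ∑ n ∈ range K, ‖b n - c‖ ≤ ∑' n, ‖b n - c‖ :=
    fun K => h.sum_le_tsum _ fun n _ => norm_nonneg _
  have hshift : ∑ n ∈ range N, ‖b (n + 1) - c‖ ≤ ∑' n, ‖b n - c‖ := by
    refine le_trans ?_ (hpartial (N + 1))
    rw [sum_range_succ']
    exact le_add_of_nonneg_right (norm_nonneg _)
  calc ∑ n ∈ range N, ‖b (n + 1) - b n‖
      ≤ ∑ n ∈ range N, (‖b (n + 1) - c‖ + ‖b n - c‖) :=
        sum_le_sum fun n _ => by simpa only [dist_eq_norm] using dist_triangle_right _ _ c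
    _ ≤ 2 * ∑' n, ‖b n - c‖ := by
      rw [sum_add_distrib]; linarith [hpartial N]

lemma norm_sum_range_pow_succ_mul_le {𝕜 : Type*} [NormedField 𝕜] {z : 𝕜} (hz : ‖z‖ ≤ 1)
    (hz1 : z ≠ 1) {b : ℕ → 𝕜} (hb : ∀ n, ‖b n‖ ≤ 1) (hb1 : Summable fun n => ‖b n - 1‖)
    (N : ℕ) : ‖∑ n ∈ range N, z ^ (n + 1) * b n‖ ≤ 2 / ‖z - 1‖ * (1 + 2 * ∑' n, ‖b n - 1‖) := by
  have hpartial : ∀ K, ‖∑ n ∈ range K, z ^ (n + 1)‖ ≤ 2 / ‖z - 1‖ := fun K => by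
    simp only [pow_succ', ← mul_sum, norm_mul]
    exact (mul_le_of_le_one_left (norm_nonneg _) hz).trans (norm_geom_sum_le hz hz1 K)
  refine (norm_sum_range_mul_le hpartial hb N).trans ?_
  gcongr
  exact sum_range_norm_sub_le_two_mul_tsum hb1 N

lemma Summable.tsum_sub_add_one_eq {G : Type*} [AddCommGroup G] [TopologicalSpace G]
    [IsTopologicalAddGroup G] [T2Space G] {g : ℕ → G} (hg : Summable g) :
    ∑' k, (g k - g (k + 1)) = g 0 := by
  rw [hg.tsum_sub ((summable_nat_add_iff 1).mpr hg), hg.tsum_eq_zero_add, add_sub_cancel_right]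

lemma summable_one_div_factorial : Summable fun k : ℕ => (1 : ℝ) / k ! := by
  simpa using Real.summable_pow_div_factorial 1

lemma natCast_div_factorial_succ_le {d k : ℕ} (hd : d ≤ k) :
    (d : ℝ) / (k + 1)! ≤ 1 / (k ! : ℝ) - 1 / (k + 1)! := by
  have hk : 1 / (k ! : ℝ) - 1 / (k + 1)! = k / (k + 1)! := by
    rw [Nat.factorial_succ]; push_cast; field_simp; ring
  rw [hk]
  gcongr

lemma Int.fract_le_self_of_nonneg {R : Type*} [Ring R] [LinearOrder R] [FloorRing R]
    [IsOrderedRing R] {a : R} (ha : 0 ≤ a) : Int.fract a ≤ a :=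
  sub_le_self a (Int.cast_nonneg_iff.mpr (Int.floor_nonneg.mpr ha))

section Factoradic

variable {s : ℕ → ℕ}

lemma summable_digit_div_factorial (hs : ∀ k, s (k + 1) ≤ k) :
    Summable fun k => (s (k + 1) : ℝ) / (k + 1)! :=
  summable_one_div_factorial.of_nonneg_of_le (fun _ => by positivity) fun k =>
    (natCast_div_factorial_succ_le (hs k)).trans (sub_le_self _ (by positivity))

lemma tsum_digit_div_factorial_tail_le (hs : ∀ k, s (k + 1) ≤ k) (m : ℕ) :
    ∑' k, (s (k + m + 1) : ℝ) / (k + m + 1)! ≤ 1 / (m ! : ℝ) := by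
  have hg : Summable fun k : ℕ => (1 : ℝ) / (k + m)! :=
    (summable_nat_add_iff (f := fun k : ℕ => (1 : ℝ) / k !) m).mpr summable_one_div_factorial
  calc ∑' k, (s (k + m + 1) : ℝ) / (k + m + 1)!
      ≤ ∑' k, ((1 : ℝ) / (k + m)! - 1 / (k + 1 + m)!) := by
        have h1 : Summable fun k => (s (k + m + 1) : ℝ) / (k + m + 1)! :=
          (summable_nat_add_iff (f := fun k => (s (k + 1) : ℝ) / (k + 1)!) m).mpr
            (summable_digit_div_factorial hs)
        have h2 : Summable fun k : ℕ => (1 : ℝ) / (k + 1 + m)! :=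
          (summable_nat_add_iff (f := fun k : ℕ => (1 : ℝ) / (k + m)!) 1).mpr hg
        refine Summable.tsum_le_tsum (fun k => ?_) h1 (hg.sub h2)
        rw [add_right_comm k 1 m]
        exact natCast_div_factorial_succ_le (hs _)
    _ = 1 / (m ! : ℝ) := by rw [hg.tsum_sub_add_one_eq, zero_add]

lemma factorial_mul_sum_range_digit_div_factorial (s : ℕ → ℕ) (m : ℕ) :
    (m ! : ℝ) * ∑ k ∈ range m, (s (k + 1) : ℝ) / (k + 1)!
      = ((∑ k ∈ range m, s (k + 1) * (m ! / (k + 1)!) : ℕ) : ℝ) := by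
  rw [mul_sum]
  push_cast
  refine sum_congr rfl fun k hk => ?_
  rw [Nat.cast_div (Nat.factorial_dvd_factorial (mem_range.mp hk)) (by positivity)]
  ring

lemma fract_factorial_mul_le (hs : ∀ k, s (k + 1) ≤ k) (m : ℕ) :
    Int.fract ((m ! : ℝ) * ∑' k, (s (k + 1) : ℝ) / (k + 1)!) ≤ ((s (m + 1) : ℝ) + 1) / (m + 1) := by
  set t : ℕ → ℝ := fun k => (s (k + 1) : ℝ) / (k + 1)!
  have ht : Summable t := summable_digit_div_factorial hs
  have hsplit : ∑' k, t (k + m) = t m + ∑' k, t (k + (m + 1)) := by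
    rw [((summable_nat_add_iff (f := t) m).mpr ht).tsum_eq_zero_add, zero_add]
    simp only [add_right_comm _ 1 m, add_assoc]
  rw [← ht.sum_add_tsum_nat_add m, mul_add, factorial_mul_sum_range_digit_div_factorial,
    Int.fract_natCast_add]
  calc Int.fract ((m ! : ℝ) * ∑' k, t (k + m))
      ≤ (m ! : ℝ) * ∑' k, t (k + m) := Int.fract_le_self_of_nonneg (by positivity)
    _ ≤ (m ! : ℝ) * ((s (m + 1) : ℝ) / (m + 1)! + 1 / ((m + 1)! : ℝ)) := by
      rw [hsplit]
      gcongr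
      exact tsum_digit_div_factorial_tail_le hs (m + 1)
    _ = ((s (m + 1) : ℝ) + 1) / (m + 1) := by
      rw [Nat.factorial_succ]; push_cast; field_simp

lemma norm_e_factorial_mul_sub_one_le (hs : ∀ k, s (k + 1) ≤ k) {m A : ℕ} (hm : 0 < m)
    (hdigit : (s (m + 1) : ℝ) ≤ (m + 1) / A) :
    ‖e (m ! * ∑' k, (s (k + 1) : ℝ) / (k + 1)!) - 1‖ ≤ 2 * π * (1 / A + 1 / m) := by
  have hfract_le : ((s (m + 1) : ℝ) + 1) / (m + 1) ≤ 1 / A + 1 / m := by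
    rw [add_div]
    refine add_le_add ?_ (one_div_le_one_div_of_le (Nat.cast_pos.mpr hm) (by linarith))
    calc (s (m + 1) : ℝ) / (m + 1) ≤ ((m : ℝ) + 1) / A / (m + 1) := by gcongr
      _ = 1 / A := by rw [div_div_cancel_left' (by positivity), one_div]
  rw [← e_fract]
  refine (norm_e_sub_one_le _).trans ?_
  rw [abs_of_nonneg (Int.fract_nonneg _)]
  gcongr
  exact (fract_factorial_mul_le hs m).trans hfract_le

end Factoradic

theorem stmt_15_general (f : ℕ → ℕ) (hf : StrictMono f)
    (hfsum : Summable fun n : ℕ => (1 : ℝ) / (f n))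
    (a : ℕ → ℕ)
    (hasum : Summable fun n : ℕ => (1 : ℝ) / (a n))
    (α : ℝ) (hα : α ∈ Set.Ioo (0 : ℝ) 1)
    (s : ℕ → ℕ) (hdig : ∀ i : ℕ, 1 ≤ i → s i ≤ i - 1)
    (hrep : α = ∑' n : ℕ, (s (n + 1) : ℝ) / (Nat.factorial (n + 1)))
    (hE : ∀ i : ℕ, 1 ≤ i → (s (f i + 1) : ℝ) ≤ ((f i : ℝ) + 1) / (a i)) :
    ∃ C > 0, ∀ N : ℕ,
      ‖∑ n ∈ Finset.Icc 1 N, e ((n + Nat.factorial (f n)) * α)‖ ≤ C := by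
  have hs : ∀ k, s (k + 1) ≤ k := fun k => by simpa using hdig (k + 1) (by omega)
  set b : ℕ → ℂ := fun n => e ((f (n + 1))! * α)
  have hb_close : ∀ n, ‖b n - 1‖ ≤ 2 * π * (1 / a (n + 1) + 1 / f (n + 1)) := fun n => by
    simpa only [b, ← hrep] using norm_e_factorial_mul_sub_one_le hs
      ((Nat.zero_le _).trans_lt (hf n.succ_pos)) (hE _ n.succ_pos)
  have hb_summable : Summable fun n => ‖b n - 1‖ :=
    Summable.of_nonneg_of_le (fun _ => norm_nonneg _) hb_close
      ((((summable_nat_add_iff 1).mpr hasum).add ((summable_nat_add_iff 1).mpr hfsum)).mul_left _)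
  have hz : e α ≠ 1 := e_ne_one hα
  refine ⟨2 / ‖e α - 1‖ * (1 + 2 * ∑' n, ‖b n - 1‖),
    mul_pos (div_pos two_pos (norm_pos_iff.mpr (sub_ne_zero.mpr hz))) (by positivity),
    fun N => ?_⟩
  have hreindex : ∑ n ∈ Icc 1 N, e ((n + (f n)!) * α) = ∑ n ∈ range N, e α ^ (n + 1) * b n := by
    rw [← Ico_add_one_right_eq_Icc, sum_Ico_eq_sum_range]
    refine sum_congr rfl fun n _ => ?_
    rw [add_mul, e_add, add_comm 1 n, ← e_natCast_mul]
  rw [hreindex]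
  exact norm_sum_range_pow_succ_mul_le (norm_e α).le hz (fun n => (norm_e _).le) hb_summable N

theorem stmt_15 (f : ℕ → ℕ) (hf : StrictMono f)
    (hfsum : Summable fun n : ℕ => (1 : ℝ) / (f n))
    (a : ℕ → ℕ) (ha : ∀ n, 0 < a n)
    (hasum : Summable fun n : ℕ => (1 : ℝ) / (a n))
    (α : ℝ) (hα : α ∈ Set.Ioo (0 : ℝ) 1)
    (s : ℕ → ℕ) (hdig : ∀ i : ℕ, 1 ≤ i → s i ≤ i - 1)
    (hrep : α = ∑' n : ℕ, (s (n + 1) : ℝ) / (Nat.factorial (n + 1)))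
    (hE : ∀ i : ℕ, 1 ≤ i → (s (f i + 1) : ℝ) ≤ ((f i : ℝ) + 1) / (a i)) :
    ∃ C > 0, ∀ N : ℕ,
      ‖∑ n ∈ Finset.Icc 1 N, e ((n + Nat.factorial (f n)) * α)‖ ≤ C :=
  stmt_15_general f hf hfsum a hasum α hα s hdig hrep hE
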